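/- arXiv:1803.01509 — 2 statements merged into one kernel-verified Lean document; each statement's English description precedes it below -/
import Mathlib

section
/- Let V be a real inner product space and Q : V → ℝ a quadratic form. Suppose the maximal dimension of a subspace of V on which Q is negative definite is at most I. Let U₁, …, U_{I+1} be subspaces of V that are pairwise 'Q-independent' in the sense that Q(u + v) = Q(u) + Q(v) whenever u ∈ Uᵢ, v ∈ Uⱼ with i ≠ j, and such that vectors from distinct Uᵢ are linearly independent (i.e., the sum U₁ + ⋯ + U_{I+1} is direct). Then there exists an index i with 1 ≤ i ≤ I+1 such that Q(u) ≥ 0 for all u ∈ Uᵢ. -/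
open Module

theorem stmt_0 {V : Type*} [NormedAddCommGroup V] [InnerProductSpace ℝ V]
    (Q : QuadraticForm ℝ V) (I : ℕ)
    (hIndex : ∀ W : Submodule ℝ V, (∀ v ∈ W, v ≠ 0 → Q v < 0) →
      Module.rank ℝ W ≤ I)
    (U : Fin (I + 1) → Submodule ℝ V)
    (hQadd : ∀ i j, i ≠ j → ∀ u ∈ U i, ∀ v ∈ U j, Q (u + v) = Q u + Q v)
    (hindep : iSupIndep U) :
    ∃ i : Fin (I + 1), ∀ u ∈ U i, 0 ≤ Q u := by
  by_contra h
  push_neg at h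
  choose u hu hQu using h
  have hune : ∀ i, u i ≠ 0 := by
    intro i hi
    have := hQu i
    rw [hi] at this
    simp at this
  -- linear independence
  have hli : LinearIndependent ℝ u := hindep.linearIndependent U hu hune
  set B := QuadraticMap.associated (R := ℝ) Q with hB
  have hBself : ∀ x, B x x = Q x := fun x => Q.associated_eq_self_apply ℝ x
  have hBcross : ∀ i j, i ≠ j → B (u i) (u j) = 0 := by
    intro i j hij
    rw [hB, QuadraticMap.associated_apply, hQadd i j hij (u i) (hu i) (u j) (hu j)]
    simp
  set W : Submodule ℝ V := Submodule.span ℝ (Set.range u) with hW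
  have hneg : ∀ v ∈ W, v ≠ 0 → Q v < 0 := by
    intro v hv hvne
    rw [hW, Submodule.mem_span_range_iff_exists_fun ℝ] at hv
    obtain ⟨c, hc⟩ := hv
    have hcne : ∃ i, c i ≠ 0 := by
      by_contra hc0
      push_neg at hc0
      apply hvne
      rw [← hc]
      simp [hc0]
    have hQv : Q v = ∑ i, c i ^ 2 * Q (u i) := by
      rw [← hBself, ← hc]
      simp only [map_sum, LinearMap.sum_apply, map_smul, LinearMap.smul_apply, smul_eq_mul]
      refine Finset.sum_congr rfl fun j _ => ?_
      rw [Finset.sum_eq_single j (fun i _ hij => by rw [hBcross i j hij]; ring)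
        (fun h => absurd (Finset.mem_univ j) h), hBself]
      ring
    rw [hQv]
    obtain ⟨i, hi⟩ := hcne
    have hlt : ∑ j, c j ^ 2 * Q (u j) < ∑ _j : Fin (I + 1), (0 : ℝ) :=
      Finset.sum_lt_sum
        (fun j _ => mul_nonpos_of_nonneg_of_nonpos (sq_nonneg _) (hQu j).le)
        ⟨i, Finset.mem_univ i, mul_neg_of_pos_of_neg (by positivity) (hQu i)⟩
    simpa using hlt
  have hrank := hIndex W hneg
  have : Module.rank ℝ W = (I + 1 : ℕ) := by
    haveI := Classical.decEq V
    haveI : Fintype (Set.range u) := Set.fintypeRange u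
    rw [hW, rank_span hli, Cardinal.mk_fintype,
      Set.card_range_of_injective hli.injective]
    simp
  rw [this] at hrank
  exact absurd hrank (by exact_mod_cast Nat.not_succ_le_self I)
end

section
/- Let n ≥ 1, let B = B(p, r) ⊂ ℝⁿ be an open ball, and let u : B → ℝ be a positive differentiable function such that ‖∇(log u)(x)‖ ≤ C/(r − ‖x − p‖) for all x ∈ B, where C > 0. Then for any two points x, y in the closed half-ball B̄(p, r/2), one has u(x) ≤ e^{2C·ln 2 + 2C} · u(y); in particular sup_{B̄(p,r/2)} u ≤ K · inf_{B̄(p,r/2)} u for a constant K depending only on C. -/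
open Metric

theorem stmt_8 (n : ℕ) (hn : 1 ≤ n) (p : EuclideanSpace ℝ (Fin n)) (r C : ℝ)
    (hr : 0 < r) (hC : 0 < C)
    (u : EuclideanSpace ℝ (Fin n) → ℝ)
    (hpos : ∀ x ∈ ball p r, 0 < u x)
    (hdiff : DifferentiableOn ℝ u (ball p r))
    (hgrad : ∀ x ∈ ball p r,
      ‖gradient (fun y => Real.log (u y)) x‖ ≤ C / (r - dist x p)) :
    ∀ x ∈ closedBall p (r / 2), ∀ y ∈ closedBall p (r / 2),
      u x ≤ Real.exp (2 * C * Real.log 2 + 2 * C) * u y := by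
  intro x hx y hy
  set f : EuclideanSpace ℝ (Fin n) → ℝ := fun z => Real.log (u z) with hf
  have hsub : closedBall p (r / 2) ⊆ ball p r := by
    apply closedBall_subset_ball; linarith
  have hdf : ∀ z ∈ closedBall p (r / 2), DifferentiableAt ℝ f z := by
    intro z hz
    have hz' := hsub hz
    have hu : DifferentiableAt ℝ u z :=
      hdiff.differentiableAt (isOpen_ball.mem_nhds hz')
    exact hu.log (ne_of_gt (hpos z hz'))
  have hbound : ∀ z ∈ closedBall p (r / 2), ‖fderiv ℝ f z‖ ≤ 2 * C / r := by
    intro z hz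
    have hz' := hsub hz
    have h1 : ‖fderiv ℝ f z‖ = ‖gradient f z‖ := by
      simp [gradient]
    rw [h1]
    refine (hgrad z hz').trans ?_
    have hd : dist z p ≤ r / 2 := mem_closedBall.mp hz
    have h2 : r / 2 ≤ r - dist z p := by linarith
    calc C / (r - dist z p) ≤ C / (r / 2) :=
          div_le_div_of_nonneg_left hC.le (by linarith) h2
      _ = 2 * C / r := by field_simp
  have hlip := Convex.norm_image_sub_le_of_norm_fderiv_le hdf hbound
    (convex_closedBall p (r / 2)) hy hx
  have hdist : ‖x - y‖ ≤ r := by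
    have := dist_triangle_right x y p
    rw [← dist_eq_norm]
    have hxd : dist x p ≤ r / 2 := mem_closedBall.mp hx
    have hyd : dist y p ≤ r / 2 := mem_closedBall.mp hy
    linarith
  have hfb : f x - f y ≤ 2 * C := by
    have h1 : f x - f y ≤ ‖f x - f y‖ := le_abs_self _
    have h2 : ‖f x - f y‖ ≤ 2 * C / r * ‖x - y‖ := hlip
    have h3 : 2 * C / r * ‖x - y‖ ≤ 2 * C / r * r :=
      mul_le_mul_of_nonneg_left hdist (by positivity)
    have h4 : 2 * C / r * r = 2 * C := by field_simp
    linarith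
  have hux : 0 < u x := hpos x (hsub hx)
  have huy : 0 < u y := hpos y (hsub hy)
  have key : u x ≤ Real.exp (2 * C) * u y := by
    have : Real.log (u x) ≤ Real.log (u y) + 2 * C := by
      have : f x - f y ≤ 2 * C := hfb
      simp only [hf] at this
      linarith
    calc u x = Real.exp (Real.log (u x)) := (Real.exp_log hux).symm
      _ ≤ Real.exp (Real.log (u y) + 2 * C) := Real.exp_le_exp.mpr this
      _ = Real.exp (2 * C) * u y := by
          rw [Real.exp_add, Real.exp_log huy]; ring
  have hmono : Real.exp (2 * C) ≤ Real.exp (2 * C * Real.log 2 + 2 * C) := by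
    apply Real.exp_le_exp.mpr
    have hlog2 : 0 < Real.log 2 := Real.log_pos (by norm_num)
    nlinarith
  calc u x ≤ Real.exp (2 * C) * u y := key
    _ ≤ Real.exp (2 * C * Real.log 2 + 2 * C) * u y :=
        mul_le_mul_of_nonneg_right hmono huy.le
end
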